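/- arXiv:2102.11121 — 5 statements merged into one kernel-verified Lean document; each statement's English description precedes it below -/
import Mathlib

section
/- Let L be a finite set, θ₀, θ₁ : L → ℝ, and w₀, w₁, ε ∈ ℝ with w₀ + w₁ = 1. Define α : L → ℝ by α(i) = w₀θ₀(i) + w₁θ₁(i) and β : L × L → ℝ by β(i,j) = (w₀ − ε)θ₀(i)θ₀(j) + (w₁ − ε)θ₁(i)θ₁(j) + ε·θ₀(i)θ₁(j) + ε·θ₁(i)θ₀(j). Then for all i, j ∈ L, β(i,j) − α(i)α(j) = (w₀w₁ − ε)·(θ₀(i) − θ₁(i))·(θ₀(j) − θ₁(j)); equivalently, as matrices, β − ααᵀ = (w₀w₁ − ε)(θ₀ − θ₁)(θ₀ − θ₁)ᵀ. -/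
theorem stmt_4 {L : Type*} [Fintype L] (θ₀ θ₁ : L → ℝ) (w₀ w₁ ε : ℝ)
    (hw : w₀ + w₁ = 1)
    (α : L → ℝ) (hα : ∀ i, α i = w₀ * θ₀ i + w₁ * θ₁ i)
    (β : L → L → ℝ)
    (hβ : ∀ i j, β i j = (w₀ - ε) * (θ₀ i * θ₀ j) + (w₁ - ε) * (θ₁ i * θ₁ j)
        + ε * (θ₀ i * θ₁ j) + ε * (θ₁ i * θ₀ j)) :
    ∀ i j, β i j - α i * α j = (w₀ * w₁ - ε) * (θ₀ i - θ₁ i) * (θ₀ j - θ₁ j) := by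
  intro i j
  have h1 : w₁ = 1 - w₀ := by linarith
  rw [hβ, hα, hα, h1]
  ring
end

section
/- Let L be a finite set, θ₀, θ₁ : L → ℝ, and w₀, w₁, ε ∈ ℝ with w₀ + w₁ = 1, w₁ > 0, and w₀w₁ > ε. Define α(i) = w₀θ₀(i) + w₁θ₁(i) and β(i,j) = (w₀ − ε)θ₀(i)θ₀(j) + (w₁ − ε)θ₁(i)θ₁(j) + ε·θ₀(i)θ₁(j) + ε·θ₁(i)θ₀(j). Then for every i ∈ L: θ₀(i) = α(i) + √(β(i,i) − α(i)²)/√(w₀/w₁ − ε/w₁²) or θ₀(i) = α(i) − √(β(i,i) − α(i)²)/√(w₀/w₁ − ε/w₁²), and in either case θ₁(i) = (α(i) − w₀θ₀(i))/w₁. -/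
/-! Since `w₀ + w₁ = 1`, the variance `β(i,i) - α(i)²` of the two-region mixture equals
`(w₀w₁ - ε)(θ₀(i) - θ₁(i))²`, while `w₀/w₁ - ε/w₁² = (w₀w₁ - ε)/w₁²`. Hence the square-root
quotient is `w₁|θ₀(i) - θ₁(i)|`, and `θ₀(i) = α(i) + w₁(θ₀(i) - θ₁(i))` is one of the two
candidates, depending on the sign of `θ₀(i) - θ₁(i)`. -/

section TwoRegionMixture

variable {w₀ w₁ ε : ℝ}

lemma mixture_second_moment_sub_sq_mean (hw : w₀ + w₁ = 1) (a b : ℝ) :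
    (w₀ - ε) * (a * a) + (w₁ - ε) * (b * b) + ε * (a * b) + ε * (b * a)
        - (w₀ * a + w₁ * b) ^ 2 = (w₀ * w₁ - ε) * (a - b) ^ 2 := by
  obtain rfl : w₀ = 1 - w₁ := by linarith
  ring

lemma eq_mixture_mean_add (hw : w₀ + w₁ = 1) (a b : ℝ) :
    a = (w₀ * a + w₁ * b) + w₁ * (a - b) := by
  linear_combination (-a) * hw

lemma sqrt_div_sub_div_sq (hw₁ : 0 < w₁) :
    √(w₀ / w₁ - ε / w₁ ^ 2) = √(w₀ * w₁ - ε) / w₁ := by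
  have hsplit : w₀ / w₁ - ε / w₁ ^ 2 = (w₀ * w₁ - ε) / w₁ ^ 2 := by
    field_simp
  rw [hsplit, Real.sqrt_div' _ (sq_nonneg w₁), Real.sqrt_sq hw₁.le]

end TwoRegionMixture

lemma sqrt_mul_sq_div_sqrt_div {c w : ℝ} (hc : 0 < c) (hw : 0 < w) (d : ℝ) :
    √(c * d ^ 2) / (√c / w) = |w * d| := by
  have hsc : √c ≠ 0 := (Real.sqrt_pos.mpr hc).ne'
  rw [Real.sqrt_mul hc.le, Real.sqrt_sq_eq_abs, abs_mul, abs_of_pos hw]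
  field_simp

lemma eq_add_abs_or_eq_sub_abs {x y z : ℝ} (h : x = y + z) :
    x = y + |z| ∨ x = y - |z| := by
  rcases abs_choice z with hz | hz <;> rw [hz]
  · exact Or.inl h
  · exact Or.inr (by rw [h]; ring)

theorem stmt_8_general {L : Type*} (θ₀ θ₁ : L → ℝ) (w₀ w₁ ε : ℝ)
    (hw : w₀ + w₁ = 1) (hw1 : w₁ > 0) (hwe : w₀ * w₁ > ε)
    (α : L → ℝ) (hα : ∀ i, α i = w₀ * θ₀ i + w₁ * θ₁ i)
    (β : L → L → ℝ)
    (hβ : ∀ i j, β i j = (w₀ - ε) * (θ₀ i * θ₀ j) + (w₁ - ε) * (θ₁ i * θ₁ j)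
        + ε * (θ₀ i * θ₁ j) + ε * (θ₁ i * θ₀ j)) :
    ∀ i, (θ₀ i = α i + Real.sqrt (β i i - (α i) ^ 2) / Real.sqrt (w₀ / w₁ - ε / w₁ ^ 2) ∨
          θ₀ i = α i - Real.sqrt (β i i - (α i) ^ 2) / Real.sqrt (w₀ / w₁ - ε / w₁ ^ 2)) ∧
         θ₁ i = (α i - w₀ * θ₀ i) / w₁ := by
  intro i
  have hroot : √(β i i - α i ^ 2) / √(w₀ / w₁ - ε / w₁ ^ 2) = |w₁ * (θ₀ i - θ₁ i)| := by
    rw [hβ, hα, mixture_second_moment_sub_sq_mean hw, sqrt_div_sub_div_sq hw1,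
      sqrt_mul_sq_div_sqrt_div (sub_pos.mpr hwe) hw1]
  have hθ₀ : θ₀ i = α i + w₁ * (θ₀ i - θ₁ i) := hα i ▸ eq_mixture_mean_add hw _ _
  refine ⟨hroot ▸ eq_add_abs_or_eq_sub_abs hθ₀, ?_⟩
  rw [hα]
  field_simp
  ring

theorem stmt_8 {L : Type*} [Fintype L] (θ₀ θ₁ : L → ℝ) (w₀ w₁ ε : ℝ)
    (hw : w₀ + w₁ = 1) (hw1 : w₁ > 0) (hwe : w₀ * w₁ > ε)
    (α : L → ℝ) (hα : ∀ i, α i = w₀ * θ₀ i + w₁ * θ₁ i)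
    (β : L → L → ℝ)
    (hβ : ∀ i j, β i j = (w₀ - ε) * (θ₀ i * θ₀ j) + (w₁ - ε) * (θ₁ i * θ₁ j)
        + ε * (θ₀ i * θ₁ j) + ε * (θ₁ i * θ₀ j)) :
    ∀ i, (θ₀ i = α i + Real.sqrt (β i i - (α i) ^ 2) / Real.sqrt (w₀ / w₁ - ε / w₁ ^ 2) ∨
          θ₀ i = α i - Real.sqrt (β i i - (α i) ^ 2) / Real.sqrt (w₀ / w₁ - ε / w₁ ^ 2)) ∧
         θ₁ i = (α i - w₀ * θ₀ i) / w₁ :=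
  stmt_8_general θ₀ θ₁ w₀ w₁ ε hw hw1 hwe α hα β hβ
end

section
/- Let L be a finite set, θ₀, θ₁ : L → ℝ, and w₀, w₁, ε ∈ ℝ with w₀ + w₁ = 1, w₁ ≠ 0, and w₀w₁ ≠ ε. Define α(i) = w₀θ₀(i) + w₁θ₁(i) and β(i,j) = (w₀ − ε)θ₀(i)θ₀(j) + (w₁ − ε)θ₁(i)θ₁(j) + ε·θ₀(i)θ₁(j) + ε·θ₁(i)θ₀(j). Let i ∈ L with θ₀(i) ≠ θ₁(i). Then for every j ∈ L with j ≠ i: θ₀(j) = (w₁β(i,j) − α(j)(w₁θ₁(i) + ε(θ₀(i) − θ₁(i)))) / ((w₀w₁ − ε)(θ₀(i) − θ₁(i))) and θ₁(j) = (α(j) − w₀θ₀(j))/w₁. -/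
/-- With `a = θ(i)` and `b = θ(j)`: eliminating `θ₁(j)` between `w₁ β(i,j)` and `α(j)` leaves a multiple of `θ₀(j)`. -/
lemma mul_sub_mul_eq_of_add_eq_one {w₀ w₁ ε a₀ a₁ b₀ b₁ : ℝ} (hw : w₀ + w₁ = 1) :
    w₁ * ((w₀ - ε) * (a₀ * b₀) + (w₁ - ε) * (a₁ * b₁) + ε * (a₀ * b₁) + ε * (a₁ * b₀))
      - (w₀ * b₀ + w₁ * b₁) * (w₁ * a₁ + ε * (a₀ - a₁))
      = (w₀ * w₁ - ε) * (a₀ - a₁) * b₀ := by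
  obtain rfl : w₀ = 1 - w₁ := by linarith
  ring

theorem stmt_9_general {L : Type*} (θ₀ θ₁ : L → ℝ) (w₀ w₁ ε : ℝ)
    (hw : w₀ + w₁ = 1) (hw1 : w₁ ≠ 0) (hwe : w₀ * w₁ ≠ ε)
    (α : L → ℝ) (hα : ∀ i, α i = w₀ * θ₀ i + w₁ * θ₁ i)
    (β : L → L → ℝ)
    (hβ : ∀ i j, β i j = (w₀ - ε) * (θ₀ i * θ₀ j) + (w₁ - ε) * (θ₁ i * θ₁ j)
        + ε * (θ₀ i * θ₁ j) + ε * (θ₁ i * θ₀ j))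
    (i : L) (hi : θ₀ i ≠ θ₁ i) :
    ∀ j, j ≠ i →
      θ₀ j = (w₁ * β i j - α j * (w₁ * θ₁ i + ε * (θ₀ i - θ₁ i)))
        / ((w₀ * w₁ - ε) * (θ₀ i - θ₁ i)) ∧
      θ₁ j = (α j - w₀ * θ₀ j) / w₁ := by
  intro j _
  have hden : (w₀ * w₁ - ε) * (θ₀ i - θ₁ i) ≠ 0 :=
    mul_ne_zero (sub_ne_zero.mpr hwe) (sub_ne_zero.mpr hi)
  constructor
  · rw [hβ, hα, mul_sub_mul_eq_of_add_eq_one hw, mul_div_cancel_left₀ _ hden]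
  · rw [hα, eq_div_iff hw1]
    ring

theorem stmt_9 {L : Type*} [Fintype L] (θ₀ θ₁ : L → ℝ) (w₀ w₁ ε : ℝ)
    (hw : w₀ + w₁ = 1) (hw1 : w₁ ≠ 0) (hwe : w₀ * w₁ ≠ ε)
    (α : L → ℝ) (hα : ∀ i, α i = w₀ * θ₀ i + w₁ * θ₁ i)
    (β : L → L → ℝ)
    (hβ : ∀ i j, β i j = (w₀ - ε) * (θ₀ i * θ₀ j) + (w₁ - ε) * (θ₁ i * θ₁ j)
        + ε * (θ₀ i * θ₁ j) + ε * (θ₁ i * θ₀ j))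
    (i : L) (hi : θ₀ i ≠ θ₁ i) :
    ∀ j, j ≠ i →
      θ₀ j = (w₁ * β i j - α j * (w₁ * θ₁ i + ε * (θ₀ i - θ₁ i)))
        / ((w₀ * w₁ - ε) * (θ₀ i - θ₁ i)) ∧
      θ₁ j = (α j - w₀ * θ₀ j) / w₁ :=
  stmt_9_general θ₀ θ₁ w₀ w₁ ε hw hw1 hwe α hα β hβ i hi
end

section
/- Let L be a finite set, θ₀, θ₁ : L → ℝ, and w₀, w₁, ε ∈ ℝ with w₀ + w₁ = 1. Define M ∈ ℝ^{L×L} by M(i,j) = β(i,j) − α(i)α(j), where α(i) = w₀θ₀(i) + w₁θ₁(i) and β(i,j) = (w₀ − ε)θ₀(i)θ₀(j) + (w₁ − ε)θ₁(i)θ₁(j) + ε·θ₀(i)θ₁(j) + ε·θ₁(i)θ₀(j). Then the vector v = θ₀ − θ₁ satisfies M·v = (w₀w₁ − ε)·‖θ₀ − θ₁‖²·v, i.e., θ₀ − θ₁ is an eigenvector of β − ααᵀ with eigenvalue (w₀w₁ − ε)‖θ₀ − θ₁‖² (where ‖·‖ is the Euclidean norm on ℝ^L). -/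
theorem stmt_11 {L : Type*} [Fintype L] (θ₀ θ₁ : L → ℝ) (w₀ w₁ ε : ℝ)
    (hw : w₀ + w₁ = 1)
    (α : L → ℝ) (hα : ∀ i, α i = w₀ * θ₀ i + w₁ * θ₁ i)
    (β : L → L → ℝ)
    (hβ : ∀ i j, β i j = (w₀ - ε) * (θ₀ i * θ₀ j) + (w₁ - ε) * (θ₁ i * θ₁ j)
        + ε * (θ₀ i * θ₁ j) + ε * (θ₁ i * θ₀ j))
    (M : Matrix L L ℝ) (hM : ∀ i j, M i j = β i j - α i * α j) :
    M.mulVec (θ₀ - θ₁)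
      = ((w₀ * w₁ - ε) * ‖(WithLp.equiv 2 (L → ℝ)).symm (θ₀ - θ₁)‖ ^ 2) • (θ₀ - θ₁) := by
  have hnorm : ‖(WithLp.equiv 2 (L → ℝ)).symm (θ₀ - θ₁)‖ ^ 2
      = ∑ j, (θ₀ j - θ₁ j) ^ 2 := by
    rw [EuclideanSpace.norm_eq, Real.sq_sqrt (by positivity)]
    simp [sq_abs]
  have hw₁ : w₁ = 1 - w₀ := by linarith
  funext i
  simp only [Matrix.mulVec, dotProduct, Pi.smul_apply, Pi.sub_apply, smul_eq_mul, hnorm,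
    Finset.mul_sum]
  rw [Finset.sum_mul]
  apply Finset.sum_congr rfl
  intro j _
  simp only [hM, hβ, hα, hw₁, Pi.sub_apply]
  ring
end

section
/- Let L be a finite set, θ₀, θ₁ : L → ℝ with θ₀ ≠ θ₁, and w₀, w₁, ε ∈ ℝ with w₀ + w₁ = 1 and w₀w₁ > ε. Define M ∈ ℝ^{L×L} by M(i,j) = β(i,j) − α(i)α(j), where α(i) = w₀θ₀(i) + w₁θ₁(i) and β(i,j) = (w₀ − ε)θ₀(i)θ₀(j) + (w₁ − ε)θ₁(i)θ₁(j) + ε·θ₀(i)θ₁(j) + ε·θ₁(i)θ₀(j). Let v ∈ ℝ^L with ‖v‖ = 1 and λ ≠ 0 satisfy M·v = λ·v. Then λ = (w₀w₁ − ε)‖θ₀ − θ₁‖² > 0, and θ₀ − θ₁ = √(λ/(w₀w₁ − ε))·v or θ₀ − θ₁ = −√(λ/(w₀w₁ − ε))·v. -/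
theorem stmt_14 {L : Type*} [Fintype L] (θ₀ θ₁ : L → ℝ) (hθ : θ₀ ≠ θ₁)
    (w₀ w₁ ε : ℝ) (hw : w₀ + w₁ = 1) (hwe : w₀ * w₁ > ε)
    (α : L → ℝ) (hα : ∀ i, α i = w₀ * θ₀ i + w₁ * θ₁ i)
    (β : L → L → ℝ)
    (hβ : ∀ i j, β i j = (w₀ - ε) * (θ₀ i * θ₀ j) + (w₁ - ε) * (θ₁ i * θ₁ j)
        + ε * (θ₀ i * θ₁ j) + ε * (θ₁ i * θ₀ j))
    (M : Matrix L L ℝ) (hM : ∀ i j, M i j = β i j - α i * α j)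
    (v : L → ℝ) (hv : ‖(WithLp.equiv 2 (L → ℝ)).symm v‖ = 1)
    (lam : ℝ) (hlam : lam ≠ 0)
    (heig : M.mulVec v = lam • v) :
    lam = (w₀ * w₁ - ε) * ‖(WithLp.equiv 2 (L → ℝ)).symm (θ₀ - θ₁)‖ ^ 2 ∧ 0 < lam ∧
      (θ₀ - θ₁ = Real.sqrt (lam / (w₀ * w₁ - ε)) • v ∨
       θ₀ - θ₁ = -(Real.sqrt (lam / (w₀ * w₁ - ε)) • v)) := by
  have hnorm : ∀ x : L → ℝ, ‖(WithLp.equiv 2 (L → ℝ)).symm x‖ ^ 2 = ∑ i, x i ^ 2 := by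
    intro x
    rw [EuclideanSpace.norm_eq]
    rw [Real.sq_sqrt (by positivity)]
    simp [Real.norm_eq_abs, sq_abs]
  set c := w₀ * w₁ - ε with hc
  have hcpos : 0 < c := by simp [hc]; linarith
  set d : L → ℝ := θ₀ - θ₁ with hd
  have hM' : ∀ i j, M i j = c * (d i * d j) := by
    intro i j
    have hw1 : w₁ = 1 - w₀ := by linarith
    simp only [hM, hβ, hα, hd, Pi.sub_apply, hc, hw1]
    ring
  set s : ℝ := ∑ j, d j * v j with hs
  have hvv : ∑ i, v i ^ 2 = 1 := by
    have := hnorm v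
    rw [hv] at this
    linarith [this]
  have heig' : ∀ i, c * d i * s = lam * v i := by
    intro i
    have := congrFun heig i
    simp only [Matrix.mulVec, dotProduct, Pi.smul_apply, smul_eq_mul] at this
    rw [← this]
    simp only [hM', hs, Finset.mul_sum]
    exact (Finset.sum_congr rfl fun j _ => by ring)
  have hls : lam = c * s ^ 2 := by
    have h1 : ∑ i, c * d i * s * v i = ∑ i, lam * v i * v i :=
      Finset.sum_congr rfl fun i _ => by rw [heig' i]
    have h2 : ∑ i, c * d i * s * v i = c * s ^ 2 := by
      simp only [Finset.sum_congr rfl (fun i _ => show c * d i * s * v i = (c*s) * (d i * v i) by ring)]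
      rw [← Finset.mul_sum, ← hs]; ring
    have h3 : ∑ i, lam * v i * v i = lam := by
      have : ∑ i, lam * v i * v i = lam * ∑ i, v i ^ 2 := by
        rw [Finset.mul_sum]; exact Finset.sum_congr rfl fun i _ => by ring
      rw [this, hvv, mul_one]
    rw [h2, h3] at h1; exact h1.symm
  have hsne : s ≠ 0 := by
    intro h; rw [h] at hls; simp at hls; exact hlam hls
  have hdv : ∀ i, d i = s * v i := by
    intro i
    have := heig' i
    rw [hls] at this
    have hcs : c * s ≠ 0 := mul_ne_zero hcpos.ne' hsne
    have h2 : (c*s) * d i = (c*s) * (s * v i) := by ring_nf; ring_nf at this; linarith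
    exact mul_left_cancel₀ hcs h2
  have hnd : ∑ i, d i ^ 2 = s ^ 2 := by
    have : ∑ i, d i ^ 2 = s ^ 2 * ∑ i, v i ^ 2 := by
      rw [Finset.mul_sum]; exact Finset.sum_congr rfl fun i _ => by rw [hdv i]; ring
    rw [this, hvv, mul_one]
  have hlam2 : lam = c * ‖(WithLp.equiv 2 (L → ℝ)).symm d‖ ^ 2 := by
    rw [hnorm, hnd]; exact hls
  have hlpos : 0 < lam := by
    rw [hls]; positivity
  refine ⟨hlam2, hlpos, ?_⟩
  have hsq : Real.sqrt (lam / c) = |s| := by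
    rw [hls]
    have h : c * s ^ 2 / c = s ^ 2 := by field_simp
    rw [h, Real.sqrt_sq_eq_abs]
  have hdsv : θ₀ - θ₁ = s • v := funext fun i => by
    simpa [hd] using hdv i
  rcases le_or_gt 0 s with h | h
  · left; rw [hsq, hd, hdsv, abs_of_nonneg h]
  · right; rw [hsq, hd, hdsv, abs_of_neg h, ← neg_smul, neg_neg]
end
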